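/- arXiv:2306.02599 — 3 statements merged into one kernel-verified Lean document; each statement's English description precedes it below -/
import Mathlib

section
/- For any product Λ × Λ' of two countably infinite sets, there exists an uncountable collection {Ω_α}_{α∈Γ} of infinite subsets of Λ × Λ' such that (i) Ω_α ∩ Ω_β is finite for all α ≠ β, and (ii) for every λ ∈ Λ and every α, the intersection Ω_α ∩ ({λ} × Λ') is infinite. -/
private def sadSeg (x : ℕ → Bool) (m : ℕ) : List Bool := (List.range m).map x

private lemma sadSeg_eq {x y : ℕ → Bool} {m m' : ℕ} (h : sadSeg x m = sadSeg y m') :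
    m = m' ∧ ∀ j < m, x j = y j := by
  have hm : m = m' := by simpa [sadSeg] using congrArg List.length h
  subst hm
  refine ⟨rfl, fun j hj => ?_⟩
  have := List.map_inj_left.mp h j (List.mem_range.mpr hj)
  exact this

private lemma not_countable_nat_bool : ¬ Countable (ℕ → Bool) := by
  intro h
  have : Countable (Set ℕ) :=
    Countable.of_equiv (ℕ → Bool) (Equiv.arrowCongr (Equiv.refl ℕ) Equiv.propEquivBool.symm)
  obtain ⟨f, hf⟩ := (inferInstance : Countable (Set ℕ)).exists_injective_nat
  exact Function.cantor_injective f hf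

/-- Upgraded Sierpiński lemma: an uncountable almost disjoint family of infinite
subsets of Λ × Λ', each member meeting every vertical fiber in an infinite set. -/
theorem sierpinski_almost_disjoint_fibers (Λ Λ' : Type*)
    [Countable Λ] [Infinite Λ] [Countable Λ'] [Infinite Λ'] :
    ∃ F : Set (Set (Λ × Λ')), ¬ F.Countable ∧ (∀ Ω ∈ F, Ω.Infinite) ∧
      (∀ Ω ∈ F, ∀ Ω' ∈ F, Ω ≠ Ω' → (Ω ∩ Ω').Finite) ∧
      ∀ Ω ∈ F, ∀ l : Λ, {p ∈ Ω | p.1 = l}.Infinite := by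
  obtain ⟨e⟩ : Nonempty (ℕ ≃ Λ) := nonempty_equiv_of_countable
  obtain ⟨g⟩ : Nonempty (List Bool ≃ Λ') := nonempty_equiv_of_countable
  set Om : (ℕ → Bool) → Set (Λ × Λ') :=
    fun x => {p | ∃ m, e.symm p.1 ≤ m ∧ p.2 = g (sadSeg x m)} with hOm
  -- fibers are infinite
  have fiber : ∀ x l, {p ∈ Om x | p.1 = l}.Infinite := by
    intro x l
    refine Set.infinite_of_injective_forall_mem
      (f := fun m : ℕ => ((l, g (sadSeg x (e.symm l + m))) : Λ × Λ')) ?_ ?_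
    · intro a b hab
      have := g.injective (congrArg Prod.snd hab)
      have := (sadSeg_eq this).1
      omega
    · intro m
      exact ⟨⟨e.symm l + m, Nat.le_add_right _ _, rfl⟩, rfl⟩
  -- injectivity of Om
  have hinj : Function.Injective Om := by
    intro x y hxy
    by_contra hne
    obtain ⟨i, hi⟩ : ∃ i, x i ≠ y i := Function.ne_iff.mp hne
    have hmem : ((e 0, g (sadSeg x (i + 1))) : Λ × Λ') ∈ Om x :=
      ⟨i + 1, by simp, rfl⟩
    rw [hxy] at hmem
    obtain ⟨m, -, hm⟩ := hmem
    obtain ⟨h1, h2⟩ := sadSeg_eq (g.injective hm)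
    exact hi (h2 i (by omega))
  refine ⟨Set.range Om, ?_, ?_, ?_, ?_⟩
  · intro hc
    have : Countable (Set.range Om) := hc.to_subtype
    have : Countable (ℕ → Bool) :=
      Countable.of_equiv _ (Equiv.ofInjective Om hinj).symm
    exact not_countable_nat_bool this
  · rintro Ω ⟨x, rfl⟩
    exact ((fiber x (e 0)).mono (Set.sep_subset _ _))
  · rintro Ω ⟨x, rfl⟩ Ω' ⟨y, rfl⟩ hne
    have hxy : x ≠ y := fun h => hne (by rw [h])
    obtain ⟨i, hi⟩ : ∃ i, x i ≠ y i := Function.ne_iff.mp hxy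
    have hsub : Om x ∩ Om y ⊆
        (fun q : ℕ × ℕ => ((e q.1, g (sadSeg x q.2)) : Λ × Λ')) ''
          (Set.Iic i ×ˢ Set.Iic i) := by
      rintro p ⟨⟨m, hm1, hm2⟩, ⟨m', hm1', hm2'⟩⟩
      obtain ⟨h1, h2⟩ := sadSeg_eq (g.injective (hm2.symm.trans hm2'))
      have hmi : m ≤ i := by
        by_contra h
        exact hi (h2 i (by omega))
      refine ⟨(e.symm p.1, m), ⟨by simpa using le_trans hm1 hmi, hmi⟩, ?_⟩
      simp [← hm2]
    exact Set.Finite.subset (((Set.finite_Iic i).prod (Set.finite_Iic i)).image _) hsub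
  · rintro Ω ⟨x, rfl⟩ l
    exact fiber x l
end

section
/- Let G be a Polish group and W ⊆ G a countably syndetic symmetric set. Then there exists a nonempty open set U in G (which can be taken to be a neighborhood of the identity) such that W² = {w₁w₂ : w₁, w₂ ∈ W} is dense in U. -/
/-!
By the Baire category theorem one of the closed sets `closure (gₙ • W)` covering `G` has nonempty
interior, hence so does `closure W`. For `V := interior (closure W)`, the set `V⁻¹ * V` is an open
neighbourhood of `1` contained in `closure W⁻¹ * closure W ⊆ closure (W⁻¹ * W) = closure (W * W)`.
-/

open scoped Pointwise
open Set

section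

variable {G : Type*} [Group G] [TopologicalSpace G]

theorem closure_mul_closure_subset [ContinuousMul G] (s t : Set G) :
    closure s * closure t ⊆ closure (s * t) := by
  rintro _ ⟨a, ha, b, hb, rfl⟩
  exact map_mem_closure₂ continuous_mul ha hb fun x hx y hy => mul_mem_mul hx hy

theorem interior_closure_nonempty_of_iUnion_smul_eq_univ [ContinuousConstSMul G G] [BaireSpace G]
    {ι : Type*} [Countable ι] {W : Set G} {g : ι → G} (h : ⋃ i, g i • W = univ) :
    (interior (closure W)).Nonempty := by
  have hcover : ⋃ i, closure (g i • W) = univ :=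
    eq_univ_of_univ_subset (h ▸ iUnion_mono fun _ => subset_closure)
  obtain ⟨i, hi⟩ := nonempty_interior_of_iUnion_of_closed (fun _ => isClosed_closure) hcover
  rw [closure_smul, interior_smul] at hi
  exact smul_set_nonempty.1 hi

end

/-- In a Polish group, the square of a countably syndetic symmetric set is dense
in some open neighborhood of the identity. -/
theorem countably_syndetic_sq_dense_in_nhd (G : Type*) [Group G] [TopologicalSpace G]
    [IsTopologicalGroup G] [PolishSpace G] (W : Set G)
    (hsym : W⁻¹ = W) (hsynd : ∃ g : ℕ → G, (⋃ n, g n • W) = Set.univ) :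
    ∃ U : Set G, IsOpen U ∧ (1 : G) ∈ U ∧ U ⊆ closure (W * W) := by
  obtain ⟨g, hg⟩ := hsynd
  set V := interior (closure W)
  obtain ⟨x, hx⟩ : V.Nonempty := interior_closure_nonempty_of_iUnion_smul_eq_univ hg
  refine ⟨V⁻¹ * V, isOpen_interior.mul_left, ⟨x⁻¹, inv_mem_inv.2 hx, x, hx, inv_mul_cancel x⟩, ?_⟩
  calc V⁻¹ * V ⊆ (closure W)⁻¹ * closure W :=
        mul_subset_mul (inv_subset_inv.2 interior_subset) interior_subset
    _ = closure W⁻¹ * closure W := by rw [inv_closure]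
    _ ⊆ closure (W⁻¹ * W) := closure_mul_closure_subset _ _
    _ = closure (W * W) := by rw [hsym]
end

section
/- Every Polish group with the Steinhaus property has automatic continuity: every group homomorphism from it to any separable topological group is continuous. -/
/-!
Given a homomorphism `φ : G →* H` and a neighbourhood `V` of `1` in `H`, pick a neighbourhood
`A` of `1` with `(A⁻¹ * A) ^ k ⊆ V`. Countably many translates of `A` cover the separable group
`H`, and pulling back shows that the symmetric set `φ ⁻¹' (A⁻¹ * A)` is countably syndetic in `G`.
The Steinhaus property then puts an open neighbourhood of `1` inside its `k`-th power, which lies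
in `φ ⁻¹' V`.
-/

open scoped Pointwise

open Set Filter Topology

theorem exists_mem_nhds_one_pow_subset {M : Type*} [Monoid M] [TopologicalSpace M]
    [ContinuousMul M] {V : Set M} (hV : V ∈ 𝓝 (1 : M)) (n : ℕ) :
    ∃ U ∈ 𝓝 (1 : M), U ^ n ⊆ V := by
  induction n generalizing V with
  | zero => exact ⟨univ, univ_mem, by simpa using mem_of_mem_nhds hV⟩
  | succ n ih =>
    obtain ⟨B, hB, hBB⟩ := exists_nhds_one_split hV
    obtain ⟨A, hA, hAn⟩ := ih hB
    refine ⟨A ∩ B, inter_mem hA hB, ?_⟩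
    calc (A ∩ B) ^ (n + 1) = (A ∩ B) ^ n * (A ∩ B) := pow_succ _ _
      _ ⊆ B * B := mul_subset_mul ((pow_subset_pow_left inter_subset_left).trans hAn)
          inter_subset_right
      _ ⊆ V := mul_subset_iff.2 hBB

theorem exists_mem_nhds_one_inv_mul_pow_subset {G : Type*} [Group G] [TopologicalSpace G]
    [IsTopologicalGroup G] {V : Set G} (hV : V ∈ 𝓝 (1 : G)) (n : ℕ) :
    ∃ U ∈ 𝓝 (1 : G), (U⁻¹ * U) ^ n ⊆ V := by
  obtain ⟨B, hB, hBn⟩ := exists_mem_nhds_one_pow_subset hV n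
  obtain ⟨U, hU, -, hUinv, hUU⟩ := exists_closed_nhds_one_inv_eq_mul_subset hB
  exact ⟨U, hU, (pow_subset_pow_left (by rwa [hUinv])).trans hBn⟩

theorem Set.inv_mul_mem_inv_mul_of_mem_smul_set {G : Type*} [Group G] {A : Set G} {a b d : G}
    (ha : a ∈ d • A) (hb : b ∈ d • A) : a⁻¹ * b ∈ A⁻¹ * A := by
  rw [mem_smul_set_iff_inv_smul_mem, smul_eq_mul] at ha hb
  have h : a⁻¹ * b = (d⁻¹ * a)⁻¹ * (d⁻¹ * b) := by group
  exact h ▸ mul_mem_mul (inv_mem_inv.2 ha) hb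

theorem MonoidHom.preimage_inv {G H : Type*} [Group G] [Group H] (φ : G →* H) (s : Set H) :
    φ ⁻¹' s⁻¹ = (φ ⁻¹' s)⁻¹ := by
  ext
  simp only [Set.mem_inv, mem_preimage, map_inv]

def IsCountablySyndetic {G : Type*} [Group G] (W : Set G) : Prop :=
  ∃ g : ℕ → G, ⋃ n, g n • W = univ

theorem isCountablySyndetic_of_mem_nhds_one {G : Type*} [Group G] [TopologicalSpace G]
    [IsTopologicalGroup G] [TopologicalSpace.SeparableSpace G] {A : Set G}
    (hA : A ∈ 𝓝 (1 : G)) : IsCountablySyndetic A := by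
  obtain ⟨d, hd⟩ := TopologicalSpace.exists_dense_seq G
  refine ⟨d, eq_univ_of_forall fun x => mem_iUnion.2 ?_⟩
  obtain ⟨n, hn⟩ := hd.mem_nhds (smul_mem_nhds_self.2 (inv_mem_nhds_one G hA) : x • A⁻¹ ∈ 𝓝 x)
  rw [mem_smul_set_iff_inv_smul_mem, Set.mem_inv, smul_eq_mul, mul_inv_rev, inv_inv] at hn
  exact ⟨n, mem_smul_set_iff_inv_smul_mem.2 hn⟩

theorem IsCountablySyndetic.preimage_inv_mul {G H : Type*} [Group G] [Group H] (φ : G →* H)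
    {A : Set H} (hA : IsCountablySyndetic A) : IsCountablySyndetic (φ ⁻¹' (A⁻¹ * A)) := by
  classical
  obtain ⟨d, hd⟩ := hA
  let g : ℕ → G := fun n => if h : (φ ⁻¹' (d n • A)).Nonempty then h.choose else 1
  refine ⟨g, eq_univ_of_forall fun x => mem_iUnion.2 ?_⟩
  obtain ⟨n, hn⟩ := mem_iUnion.1 (hd ▸ mem_univ (φ x))
  have hne : (φ ⁻¹' (d n • A)).Nonempty := ⟨x, hn⟩
  have hgn : φ (g n) ∈ d n • A := by
    simp only [g, dif_pos hne]
    exact hne.choose_spec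
  refine ⟨n, mem_smul_set_iff_inv_smul_mem.2 ?_⟩
  simpa only [smul_eq_mul, mem_preimage, map_mul, map_inv] using
    inv_mul_mem_inv_mul_of_mem_smul_set hgn hn

theorem steinhaus_implies_automatic_continuity_general (G : Type*) [Group G] [TopologicalSpace G]
    [IsTopologicalGroup G]
    (hSteinhaus : ∃ k : ℕ, ∀ W : Set G, W⁻¹ = W →
      (∃ g : ℕ → G, (⋃ n, g n • W) = Set.univ) →
      ∃ U : Set G, IsOpen U ∧ (1 : G) ∈ U ∧ U ⊆ W ^ k) :
    ∀ (H : Type*) [Group H] [TopologicalSpace H] [IsTopologicalGroup H]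
      [TopologicalSpace.SeparableSpace H] (φ : G →* H), Continuous φ := by
  intro H _ _ _ _ φ
  obtain ⟨k, hk⟩ := hSteinhaus
  refine continuous_of_tendsto_nhds_one φ fun V hV => ?_
  obtain ⟨A, hA, hAk⟩ := exists_mem_nhds_one_inv_mul_pow_subset hV k
  have hsymm : (φ ⁻¹' (A⁻¹ * A))⁻¹ = φ ⁻¹' (A⁻¹ * A) := by
    rw [← φ.preimage_inv, mul_inv_rev, inv_inv]
  obtain ⟨U, hUo, hU1, hUW⟩ :=
    hk _ hsymm ((isCountablySyndetic_of_mem_nhds_one hA).preimage_inv_mul φ)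
  exact mem_map.2 <| mem_of_superset (hUo.mem_nhds hU1)
    (hUW.trans ((preimage_pow_subset φ _ k).trans (preimage_mono hAk)))

/-- Rosendal–Solecki: a Steinhaus Polish group has automatic continuity. -/
theorem steinhaus_implies_automatic_continuity (G : Type*) [Group G] [TopologicalSpace G]
    [IsTopologicalGroup G] [PolishSpace G]
    (hSteinhaus : ∃ k : ℕ, ∀ W : Set G, W⁻¹ = W →
      (∃ g : ℕ → G, (⋃ n, g n • W) = Set.univ) →
      ∃ U : Set G, IsOpen U ∧ (1 : G) ∈ U ∧ U ⊆ W ^ k) :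
    ∀ (H : Type*) [Group H] [TopologicalSpace H] [IsTopologicalGroup H]
      [TopologicalSpace.SeparableSpace H] (φ : G →* H), Continuous φ :=
  steinhaus_implies_automatic_continuity_general G hSteinhaus
end
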